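/- arXiv:2301.02053 — 3 statements merged into one kernel-verified Lean document; each statement's English description precedes it below -/
import Mathlib

section
/- Let (V,d) be a finite metric space and U a k-element subset produced by the Gonzalez greedy algorithm (start with any u_1 ∈ V; at each step add the point of V maximizing the minimum distance to the current set). Then div(U) ≥ (1/2)·OPT, where OPT is the maximum of div(S) over all k-element subsets S of V. -/
/-!
Let `r` be the distance from the last greedy point `u (k-1)` to the earlier ones. Greediness
makes every pairwise distance among the chosen points at least `r`, and it makes every point of
`V` lie within `r` of one of the `k - 1` earlier centres. Any `k`-set `S` then has two points
sharing a centre, so `div S ≤ 2r ≤ 2 div U`.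
-/

open scoped Classical

noncomputable def fdiv {V : Type*} [MetricSpace V] (S : Finset V) : ℝ :=
  sInf {r : ℝ | ∃ u ∈ S, ∃ v ∈ S, u ≠ v ∧ r = dist u v}

section Diversity

variable {V : Type*} [MetricSpace V] {S : Finset V}

theorem fdiv_le_dist {x y : V} (hx : x ∈ S) (hy : y ∈ S) (hxy : x ≠ y) : fdiv S ≤ dist x y :=
  csInf_le ⟨0, by rintro r ⟨a, -, b, -, -, rfl⟩; exact dist_nonneg⟩ ⟨x, hx, y, hy, hxy, rfl⟩

theorem le_fdiv {r : ℝ} (hS : ∃ x ∈ S, ∃ y ∈ S, x ≠ y)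
    (h : ∀ x ∈ S, ∀ y ∈ S, x ≠ y → r ≤ dist x y) : r ≤ fdiv S := by
  obtain ⟨x, hx, y, hy, hxy⟩ := hS
  refine le_csInf ⟨dist x y, x, hx, y, hy, hxy, rfl⟩ ?_
  rintro _ ⟨a, ha, b, hb, hab, rfl⟩
  exact h a ha b hb hab

/-- Pigeonhole: two of the more than `n` points of `S` share one of the `n` centres. -/
theorem fdiv_le_two_mul_of_covered {n : ℕ} {r : ℝ} (c : ℕ → V)
    (hcov : ∀ v ∈ S, ∃ j < n, dist (c j) v ≤ r) (hn : n < S.card) : fdiv S ≤ 2 * r := by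
  choose f hf hdist using hcov
  obtain ⟨x, hx, y, hy, hxy, hfxy⟩ := Finset.exists_ne_map_eq_of_card_lt_of_maps_to
    (t := Finset.range n) (f := fun v => if hv : v ∈ S then f v hv else 0)
    (by rwa [Finset.card_range]) (fun v hv => by
      simp only [Finset.coe_range, Set.mem_Iio, dif_pos (Finset.mem_coe.mp hv)]; exact hf v hv)
  simp only [hx, hy, dite_true] at hfxy
  calc fdiv S ≤ dist x y := fdiv_le_dist hx hy hxy
    _ ≤ dist (c (f x hx)) x + dist (c (f y hy)) y := by
        rw [← hfxy]; exact dist_triangle_left x y _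
    _ ≤ 2 * r := by linarith [hdist x hx, hdist y hy]

end Diversity

section FarthestPoint

variable {V : Type*} [MetricSpace V]

def IsFarthestPointSequence (k : ℕ) (u : ℕ → V) : Prop :=
  ∀ i (hi : 0 < i) (_ : i < k) (v : V),
    (Finset.range i).inf' (Finset.nonempty_range_iff.mpr hi.ne') (fun j => dist (u j) v) ≤
    (Finset.range i).inf' (Finset.nonempty_range_iff.mpr hi.ne') (fun j => dist (u j) (u i))

variable {k m : ℕ} {u : ℕ → V}

/-- `u m` is at least this far from the shorter prefix `{u l | l < j}`, and when `u j` was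
chosen it was at least as far from that prefix as `u m`. -/
theorem IsFarthestPointSequence.inf'_le_dist (hu : IsFarthestPointSequence k u) (hm : 0 < m)
    (hmk : m < k) {i j : ℕ} (hij : i < j) (hjm : j ≤ m) :
    (Finset.range m).inf' (Finset.nonempty_range_iff.mpr hm.ne') (fun l => dist (u l) (u m)) ≤
      dist (u i) (u j) :=
  calc _ ≤ (Finset.range j).inf' (Finset.nonempty_range_iff.mpr (by omega))
          (fun l => dist (u l) (u m)) :=
        Finset.inf'_mono _ (Finset.range_subset_range.mpr hjm) _
    _ ≤ (Finset.range j).inf' (Finset.nonempty_range_iff.mpr (by omega))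
          (fun l => dist (u l) (u j)) := hu j (by omega) (by omega) (u m)
    _ ≤ dist (u i) (u j) := Finset.inf'_le _ (Finset.mem_range.mpr hij)

theorem IsFarthestPointSequence.exists_dist_le (hu : IsFarthestPointSequence k u) (hm : 0 < m)
    (hmk : m < k) (v : V) :
    ∃ j < m, dist (u j) v ≤
      (Finset.range m).inf' (Finset.nonempty_range_iff.mpr hm.ne') (fun l => dist (u l) (u m)) := by
  obtain ⟨j, hj, hje⟩ := Finset.exists_mem_eq_inf' (Finset.nonempty_range_iff.mpr hm.ne')
    (fun l => dist (u l) v)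
  exact ⟨j, Finset.mem_range.mp hj, hje ▸ hu m hm hmk v⟩

theorem IsFarthestPointSequence.inf'_le_fdiv (hu : IsFarthestPointSequence k u) (hk : 2 ≤ k)
    (hinj : Set.InjOn u (Set.Iio k)) :
    (Finset.range (k - 1)).inf' (Finset.nonempty_range_iff.mpr (by omega))
        (fun l => dist (u l) (u (k - 1))) ≤ fdiv ((Finset.range k).image u) := by
  have hmem : ∀ i < k, u i ∈ (Finset.range k).image u := fun i hi =>
    Finset.mem_image_of_mem u (Finset.mem_range.mpr hi)
  refine le_fdiv ⟨u 0, hmem 0 (by omega), u 1, hmem 1 (by omega), fun h => ?_⟩ ?_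
  · exact zero_ne_one (hinj (by simp; omega) (by simp; omega) h)
  simp only [Finset.forall_mem_image, Finset.mem_range]
  intro i hi j hj hij
  rcases lt_or_gt_of_ne (ne_of_apply_ne u hij) with h | h
  · exact hu.inf'_le_dist (by omega) (by omega) h (by omega)
  · rw [dist_comm]; exact hu.inf'_le_dist (by omega) (by omega) h (by omega)

end FarthestPoint

theorem stmt4 {V : Type*} [MetricSpace V] (k : ℕ) (hk : 2 ≤ k) (u : ℕ → V)
    (hinj : Set.InjOn u (Set.Iio k))
    (hgreedy : ∀ i (hi : 0 < i) (_ : i < k) (v : V),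
      (Finset.range i).inf' (Finset.nonempty_range_iff.mpr (by omega)) (fun j => dist (u j) v) ≤
      (Finset.range i).inf' (Finset.nonempty_range_iff.mpr (by omega)) (fun j => dist (u j) (u i))) :
    ∀ S : Finset V, S.card = k → fdiv S ≤ 2 * fdiv ((Finset.range k).image u) := by
  intro S hS
  have hu : IsFarthestPointSequence k u := hgreedy
  have hcov := fun v (_ : v ∈ S) => hu.exists_dist_le (m := k - 1) (by omega) (by omega) v
  have hU := hu.inf'_le_fdiv hk hinj
  linarith [fdiv_le_two_mul_of_covered u hcov (by omega)]
end

section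
/- Let (V,d) be a finite metric space partitioned into groups V_1,…,V_C with fairness constraints giving feasible family F = {S : |S|=k ∧ ∀c, l_c ≤ |S∩V_c| ≤ h_c}, and let OPT = max_{S ∈ F} div(S). Fix d' with (2(1−ε)/5)·OPT ≤ d' ≤ (2/5)·OPT for some ε ∈ (0,1). Suppose for each group c a set U_c ⊆ V_c is constructed greedily such that div(U_c) ≥ d', and either |U_c| = k or every v ∈ V_c satisfies min_{u ∈ U_c} d(v,u) < d'. Then there exists S' ⊆ ⋃_c U_c with S' ∈ F and div(S') ≥ d'/2 ≥ ((1−ε)/5)·OPT. -/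
open scoped Classical

def Fair {V : Type*} {C : ℕ} (grp : V → Fin C) (l h : Fin C → ℕ) (k : ℕ) (S : Finset V) : Prop :=
  S.card = k ∧ ∀ c : Fin C, l c ≤ (S.filter (fun v => grp v = c)).card ∧
    (S.filter (fun v => grp v = c)).card ≤ h c

/-!
Take an optimal fair solution `S`. In every group whose pool `U c` covers it at scale `d'`,
replace each point of `S` by a pool point closer than `d'`: as `OPT ≥ 5 d' / 2`, the replacements
are distinct and stay `OPT - 2 d' ≥ d' / 2` apart. Every other group has a `d'`-separated pool of
size `k`, in which a point chosen earlier is closer than `d' / 2` to at most one pool point; since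
fewer than `k - s c` points are chosen before group `c`, it can be filled greedily with `s c`
points at distance at least `d' / 2` from everything else. The resulting set has the same group
counts as `S`, hence is fair.
-/

open Finset

section Diversity

variable {V : Type*} [MetricSpace V]

lemma fdiv_le_dist_s10 {S : Finset V} {u v : V} (hu : u ∈ S) (hv : v ∈ S) (huv : u ≠ v) :
    fdiv S ≤ dist u v :=
  csInf_le ⟨0, by rintro r ⟨u, -, v, -, -, rfl⟩; exact dist_nonneg⟩ ⟨u, hu, v, hv, huv, rfl⟩

lemma fdiv_nonneg (S : Finset V) : 0 ≤ fdiv S :=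
  Real.sInf_nonneg (by rintro r ⟨u, -, v, -, -, rfl⟩; exact dist_nonneg)

lemma fdiv_eq_zero_of_card_le_one {S : Finset V} (hS : #S ≤ 1) : fdiv S = 0 := by
  refine (congrArg sInf (Set.eq_empty_of_forall_notMem ?_)).trans Real.sInf_empty
  rintro r ⟨u, hu, v, hv, huv, rfl⟩
  exact huv (card_le_one.mp hS u hu v hv)

lemma le_fdiv_of_pairwise {S : Finset V} {r : ℝ} (hS : (S : Set V).Pairwise (r ≤ dist · ·))
    (hcard : 1 < #S) : r ≤ fdiv S := by
  obtain ⟨u, hu, v, hv, huv⟩ := one_lt_card.mp hcard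
  refine le_csInf ⟨_, u, hu, v, hv, huv, rfl⟩ ?_
  rintro _ ⟨u, hu, v, hv, huv, rfl⟩
  exact hS hu hv huv

lemma pairwise_le_dist_of_le_fdiv {S : Finset V} {r : ℝ} (h : r ≤ fdiv S) :
    (S : Set V).Pairwise (r ≤ dist · ·) :=
  fun _ hu _ hv huv => h.trans (fdiv_le_dist_s10 hu hv huv)

end Diversity

section Separation

variable {V : Type*} [MetricSpace V]

lemma Set.Pairwise.half_le_dist {S : Set V} {r : ℝ} (h : S.Pairwise (r ≤ dist · ·)) :
    S.Pairwise (r / 2 ≤ dist · ·) :=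
  fun u hu v hv huv => by linarith [h hu hv huv, dist_nonneg (x := u) (y := v)]

lemma dist_sub_lt_dist_of_dist_lt {u v u' v' : V} {δ : ℝ} (hu : dist u u' < δ)
    (hv : dist v v' < δ) :
    dist u v - 2 * δ < dist u' v' := by
  linarith [dist_triangle4 u u' v' v, dist_comm v v']

lemma injOn_of_dist_lt {S : Set V} {f : V → V} {r δ : ℝ} (hS : S.Pairwise (r ≤ dist · ·))
    (hf : ∀ v ∈ S, dist v (f v) < δ) (hδ : 2 * δ ≤ r) : S.InjOn f := by
  intro u hu v hv huv
  by_contra hne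
  have := dist_sub_lt_dist_of_dist_lt (hf u hu) (hf v hv)
  rw [huv, dist_self] at this
  linarith [hS hu hv hne]

lemma pairwise_image_of_dist_lt {S : Set V} {f : V → V} {r δ : ℝ}
    (hS : S.Pairwise (r ≤ dist · ·)) (hf : ∀ v ∈ S, dist v (f v) < δ) :
    (f '' S).Pairwise (r - 2 * δ ≤ dist · ·) := by
  rintro _ ⟨u, hu, rfl⟩ _ ⟨v, hv, rfl⟩ huv
  have hne : u ≠ v := fun h => huv (h ▸ rfl)
  linarith [hS hu hv hne, dist_sub_lt_dist_of_dist_lt (hf u hu) (hf v hv)]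

lemma card_filter_dist_lt_half_le_one {U : Finset V} {d : ℝ}
    (hU : (U : Set V).Pairwise (d ≤ dist · ·)) (t : V) :
    #(U.filter (dist t · < d / 2)) ≤ 1 := by
  refine card_le_one.mpr fun u hu v hv => ?_
  rw [mem_filter] at hu hv
  by_contra huv
  linarith [hU hu.1 hv.1 huv, dist_triangle_left u v t]

lemma exists_subset_card_eq_half_le_dist {U T : Finset V} {d : ℝ} {m : ℕ}
    (hU : (U : Set V).Pairwise (d ≤ dist · ·)) (hm : #T + m ≤ #U) :
    ∃ W ⊆ U, #W = m ∧ ∀ t ∈ T, ∀ w ∈ W, d / 2 ≤ dist t w := by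
  set free := U.filter fun u => ∀ t ∈ T, d / 2 ≤ dist t u
  have hblocked : U \ free ⊆ T.biUnion fun t => U.filter (dist t · < d / 2) := by
    intro u hu
    simp only [free, mem_sdiff, mem_filter, not_and, not_forall, not_le] at hu
    obtain ⟨t, ht, htu⟩ := hu.2 hu.1
    exact mem_biUnion.mpr ⟨t, ht, mem_filter.mpr ⟨hu.1, htu⟩⟩
  have hfree : #U ≤ #free + #T := calc
    #U ≤ #(U \ free) + #free := card_le_card_sdiff_add_card
    _ ≤ #T * 1 + #free := by
      gcongr
      exact (card_le_card hblocked).trans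
        (card_biUnion_le_card_mul _ _ _ fun t _ => card_filter_dist_lt_half_le_one hU t)
    _ = #free + #T := by ring
  obtain ⟨W, hWfree, hW⟩ := exists_subset_card_eq (show m ≤ #free by omega)
  exact ⟨W, hWfree.trans (filter_subset _ _), hW,
    fun t ht w hw => (mem_filter.mp (hWfree hw)).2 t ht⟩

end Separation

lemma Finset.univ_biUnion_update_of_eq_empty {α ι : Type*} [Fintype ι] {W : ι → Finset α}
    {c : ι} (hc : W c = ∅) (X : Finset α) :
    univ.biUnion (Function.update W c X) = univ.biUnion W ∪ X := by
  ext v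
  simp only [mem_union, mem_biUnion, mem_univ, true_and, Function.update_apply]
  constructor
  · rintro ⟨c', hc'⟩
    split_ifs at hc'
    exacts [Or.inr hc', Or.inl ⟨c', hc'⟩]
  · rintro (⟨c', hc'⟩ | hv)
    · refine ⟨c', ?_⟩
      rwa [if_neg]
      rintro rfl
      simp [hc] at hc'
    · exact ⟨c, by simpa⟩

section Greedy

variable {V ι : Type*} [MetricSpace V] [Fintype ι]

lemma exists_greedy_completion (U : ι → Finset V) (s : ι → ℕ) {d : ℝ} (A : Finset ι)
    (W₀ : ι → Finset V) (hU : ∀ c ∈ A, (U c : Set V).Pairwise (d ≤ dist · ·))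
    (hUcard : ∀ c ∈ A, ∑ c', s c' ≤ #(U c)) (hW₀ : ∀ c, #(W₀ c) ≤ s c)
    (hW₀A : ∀ c ∈ A, W₀ c = ∅)
    (hsep : (↑(univ.biUnion W₀) : Set V).Pairwise (d / 2 ≤ dist · ·)) :
    ∃ W : ι → Finset V, (∀ c ∉ A, W c = W₀ c) ∧ (∀ c ∈ A, W c ⊆ U c ∧ #(W c) = s c) ∧
      (↑(univ.biUnion W) : Set V).Pairwise (d / 2 ≤ dist · ·) := by
  induction A using Finset.induction_on generalizing W₀ with
  | empty => exact ⟨W₀, fun _ _ => rfl, by simp, hsep⟩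
  | @insert c A hcA ih =>
    have hW₀c : W₀ c = ∅ := hW₀A c (mem_insert_self c A)
    have hroom : #(univ.biUnion W₀) + s c ≤ #(U c) := calc
      #(univ.biUnion W₀) + s c ≤ ∑ c', #(W₀ c') + s c := by gcongr; exact card_biUnion_le
      _ ≤ ∑ c', s c' := by
        rw [← add_sum_erase univ (fun c' => #(W₀ c')) (mem_univ c),
          ← add_sum_erase univ s (mem_univ c), hW₀c, card_empty, zero_add, add_comm]
        gcongr with c'
        exact hW₀ c'
      _ ≤ #(U c) := hUcard c (mem_insert_self c A)
    obtain ⟨X, hXU, hX, hXfar⟩ :=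
      exists_subset_card_eq_half_le_dist (hU c (mem_insert_self c A)) hroom
    have hne : ∀ c' ∈ A, c' ≠ c := fun c' hc' h => hcA (h ▸ hc')
    obtain ⟨W, hWout, hWin, hWsep⟩ := ih (Function.update W₀ c X)
      (fun c' hc' => hU c' (mem_insert_of_mem hc'))
      (fun c' hc' => hUcard c' (mem_insert_of_mem hc'))
      (fun c' => by
        rcases eq_or_ne c' c with rfl | h
        · simp [hX]
        · simpa [h] using hW₀ c')
      (fun c' hc' => by simpa [hne c' hc'] using hW₀A c' (mem_insert_of_mem hc'))
      (by
        rw [univ_biUnion_update_of_eq_empty hW₀c, coe_union, Set.pairwise_union]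
        refine ⟨hsep, ((hU c (mem_insert_self c A)).mono (coe_subset.mpr hXU)).half_le_dist,
          fun t ht w hw _ => ⟨hXfar t ht w hw, dist_comm t w ▸ hXfar t ht w hw⟩⟩)
    have hWc : W c = X := by simpa using hWout c hcA
    refine ⟨W, fun c' hc' => ?_, fun c' hc' => ?_, hWsep⟩
    · rw [hWout c' fun h => hc' (mem_insert_of_mem h)]
      simp [(not_or.mp (mem_insert.not.mp hc')).1]
    · rcases mem_insert.mp hc' with rfl | hc'
      · exact ⟨hWc ▸ hXU, hWc ▸ hX⟩
      · exact hWin c' hc'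

end Greedy

section Transfer

variable {V ι : Type*} [MetricSpace V] [Fintype ι] [DecidableEq ι]

lemma exists_nearest_transfer {S : Finset V} {grp : V → ι} {U : ι → Finset V} {B : Finset ι}
    {r δ : ℝ} (hS : (S : Set V).Pairwise (r ≤ dist · ·)) (hδ : 2 * δ ≤ r)
    (hB : ∀ c ∈ B, ∀ v, grp v = c → ∃ u ∈ U c, dist v u < δ) :
    ∃ W₀ : ι → Finset V, (∀ c ∈ B, W₀ c ⊆ U c ∧ #(W₀ c) = #(S.filter (grp · = c))) ∧
      (∀ c ∉ B, W₀ c = ∅) ∧ (↑(univ.biUnion W₀) : Set V).Pairwise (r - 2 * δ ≤ dist · ·) := by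
  choose! f hfU hfd using fun v (hv : grp v ∈ B) => hB (grp v) hv v rfl
  set SB := S.filter fun v => grp v ∈ B
  have hSB : ∀ v ∈ (SB : Set V), dist v (f v) < δ := fun v hv => hfd v (mem_filter.mp hv).2
  have hSBsep := hS.mono (coe_subset.mpr (filter_subset (fun v => grp v ∈ B) S))
  refine ⟨fun c => (SB.filter (grp · = c)).image f, fun c hc => ⟨?_, ?_⟩, fun c hc => ?_, ?_⟩
  · simp only [image_subset_iff, mem_filter, SB]
    rintro v ⟨-, rfl⟩
    exact hfU v hc
  · have hfib : SB.filter (grp · = c) = S.filter (grp · = c) := by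
      ext v
      simp only [mem_filter, SB]
      constructor
      · exact fun hv => ⟨hv.1.1, hv.2⟩
      · exact fun hv => ⟨⟨hv.1, hv.2 ▸ hc⟩, hv.2⟩
    rw [card_image_of_injOn ((injOn_of_dist_lt hSBsep hSB hδ).mono (coe_subset.mpr
      (filter_subset _ _))), hfib]
  · simp only [image_eq_empty, filter_eq_empty_iff, mem_filter, SB]
    rintro v ⟨-, hv⟩ rfl
    exact hc hv
  · refine (pairwise_image_of_dist_lt hSBsep hSB).mono ?_
    rw [← coe_image, coe_subset]
    exact biUnion_subset.mpr fun c _ => image_subset_image (filter_subset _ _)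

end Transfer

section Fairness

variable {V : Type*} {C : ℕ} {grp : V → Fin C}

lemma filter_univ_biUnion_eq {W : Fin C → Finset V} (hW : ∀ c, ∀ v ∈ W c, grp v = c)
    (c : Fin C) : (univ.biUnion W).filter (grp · = c) = W c := by
  ext v
  simp only [mem_filter, mem_biUnion, mem_univ, true_and]
  constructor
  · rintro ⟨⟨c', hv⟩, rfl⟩
    rwa [hW c' v hv]
  · exact fun hv => ⟨⟨c, hv⟩, hW c v hv⟩

lemma Fair.univ_biUnion {l h : Fin C → ℕ} {k : ℕ} {S : Finset V} (hS : Fair grp l h k S)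
    {W : Fin C → Finset V} (hW : ∀ c, ∀ v ∈ W c, grp v = c)
    (hcard : ∀ c, #(W c) = #(S.filter (grp · = c))) : Fair grp l h k (univ.biUnion W) := by
  have hfib : ∀ c, #((univ.biUnion W).filter (grp · = c)) = #(S.filter (grp · = c)) :=
    fun c => by rw [filter_univ_biUnion_eq hW, hcard]
  refine ⟨?_, fun c => hfib c ▸ hS.2 c⟩
  rw [← hS.1, card_eq_sum_card_fiberwise (f := grp) (t := univ) fun _ _ => mem_univ _,
    card_eq_sum_card_fiberwise (f := grp) (t := univ) fun _ _ => mem_univ _]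
  exact sum_congr rfl fun c _ => hfib c

end Fairness

theorem stmt10_general {V : Type*} [MetricSpace V] {C : ℕ} (grp : V → Fin C)
    (l h : Fin C → ℕ) (k : ℕ) (ε OPT d' : ℝ)
    (hOPT : IsGreatest {r : ℝ | ∃ S : Finset V, Fair grp l h k S ∧ r = fdiv S} OPT)
    (hd1 : 2 * (1 - ε) / 5 * OPT ≤ d') (hd2 : d' ≤ 2 / 5 * OPT)
    (U : Fin C → Finset V)
    (hUgrp : ∀ c, ∀ v ∈ U c, grp v = c)
    (hUdiv : ∀ c, d' ≤ fdiv (U c))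
    (hUalt : ∀ c, (U c).card = k ∨ ∀ v : V, grp v = c → ∃ u ∈ U c, dist v u < d') :
    ∃ S' : Finset V, S' ⊆ Finset.univ.biUnion U ∧ Fair grp l h k S' ∧
      d' / 2 ≤ fdiv S' ∧ (1 - ε) / 5 * OPT ≤ d' / 2 := by
  obtain ⟨⟨S, hS, rfl⟩, -⟩ := hOPT
  set s : Fin C → ℕ := fun c => #(S.filter (grp · = c))
  set B := univ.filter fun c => ∀ v, grp v = c → ∃ u ∈ U c, dist v u < d'
  obtain ⟨W₀, hW₀B, hW₀A, hW₀sep⟩ := exists_nearest_transfer (grp := grp) (U := U) (δ := d')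
    (pairwise_le_dist_of_le_fdiv (le_refl (fdiv S))) (by linarith [fdiv_nonneg S])
    fun c hc => (mem_filter.mp hc).2
  have hW₀ : ∀ c, #(W₀ c) ≤ s c := fun c => by
    by_cases hc : c ∈ B
    exacts [(hW₀B c hc).2.le, by simp [hW₀A c hc]]
  have hUcard : ∀ c ∈ Bᶜ, ∑ c', s c' ≤ #(U c) := fun c hc => by
    rw [← card_eq_sum_card_fiberwise fun _ _ => mem_univ _, hS.1]
    exact ((hUalt c).resolve_right fun hcov =>
      mem_compl.mp hc (mem_filter.mpr ⟨mem_univ c, hcov⟩)).ge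
  obtain ⟨W, hWB, hWA, hWsep⟩ := exists_greedy_completion U s Bᶜ W₀
    (fun c _ => pairwise_le_dist_of_le_fdiv (hUdiv c)) hUcard hW₀
    (fun c hc => hW₀A c (mem_compl.mp hc)) (hW₀sep.mono' fun u v huv => by linarith)
  have hW : ∀ c, W c ⊆ U c ∧ #(W c) = s c := fun c => by
    by_cases hc : c ∈ B
    exacts [hWB c (fun h => mem_compl.mp h hc) ▸ hW₀B c hc, hWA c (mem_compl.mpr hc)]
  have hfair := hS.univ_biUnion (fun c v hv => hUgrp c v ((hW c).1 hv)) fun c => (hW c).2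
  refine ⟨univ.biUnion W, biUnion_mono fun c _ => (hW c).1, hfair, ?_, by linarith⟩
  rcases lt_or_ge 1 #(univ.biUnion W) with hcard | hcard
  · exact le_fdiv_of_pairwise hWsep hcard
  · -- then `k ≤ 1`, so `fdiv S = 0` (the infimum of the empty set) and `d' ≤ 0`
    have := fdiv_eq_zero_of_card_le_one (hS.1.trans hfair.1.symm ▸ hcard)
    linarith [fdiv_nonneg (univ.biUnion W)]

theorem stmt10 {V : Type*} [MetricSpace V] [Fintype V] {C : ℕ} (grp : V → Fin C)
    (l h : Fin C → ℕ) (k : ℕ) (ε OPT d' : ℝ) (hε : 0 < ε) (hε1 : ε < 1)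
    (hOPT : IsGreatest {r : ℝ | ∃ S : Finset V, Fair grp l h k S ∧ r = fdiv S} OPT)
    (hd1 : 2 * (1 - ε) / 5 * OPT ≤ d') (hd2 : d' ≤ 2 / 5 * OPT)
    (U : Fin C → Finset V)
    (hUgrp : ∀ c, ∀ v ∈ U c, grp v = c)
    (hUdiv : ∀ c, d' ≤ fdiv (U c))
    (hUalt : ∀ c, (U c).card = k ∨ ∀ v : V, grp v = c → ∃ u ∈ U c, dist v u < d') :
    ∃ S' : Finset V, S' ⊆ Finset.univ.biUnion U ∧ Fair grp l h k S' ∧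
      d' / 2 ≤ fdiv S' ∧ (1 - ε) / 5 * OPT ≤ d' / 2 :=
  stmt10_general grp l h k ε OPT d' hOPT hd1 hd2 U hUgrp hUdiv hUalt
end

section
/- Let (V,d) be a finite metric space, k ≥ 2, and OPT = max_{|S|=k} div(S). Suppose U ⊆ V with |U| = k−1 arbitrary. Then there exist two distinct points s, s' of any optimal set S* mapped to a common element of U under the nearest-neighbor map, and hence min_{u ∈ U} d(v,u) ≥ OPT/2 for some v ∈ V. In particular, at every step of the greedy algorithm with current set of size < k, the farthest point is at distance ≥ OPT/2 from the current set. -/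
open scoped Classical

lemma fdiv_le_dist_s13 {V : Type*} [MetricSpace V] {S : Finset V} {s s' : V}
    (hs : s ∈ S) (hs' : s' ∈ S) (hne : s ≠ s') : fdiv S ≤ dist s s' :=
  csInf_le ⟨0, by rintro r ⟨u, -, v, -, -, rfl⟩; exact dist_nonneg⟩ ⟨s, hs, s', hs', hne, rfl⟩

lemma half_le_dist_or_half_le_dist {V : Type*} [MetricSpace V] {r : ℝ} {s s' : V}
    (h : r ≤ dist s s') (u : V) : r / 2 ≤ dist s u ∨ r / 2 ≤ dist s' u := by
  by_contra! hlt
  linarith [dist_triangle_right s s' u]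

/-- Two points of `S` share a nearest neighbour `u₀` in `U` by pigeonhole; since they are at
distance at least `fdiv S`, one of them is at distance at least `fdiv S / 2` from `u₀`, hence
from all of `U`. -/
lemma exists_forall_half_fdiv_le_dist_of_card_lt {V : Type*} [MetricSpace V] {S U : Finset V}
    (hcard : U.card < S.card) : ∃ v ∈ S, ∀ u ∈ U, fdiv S / 2 ≤ dist v u := by
  rcases U.eq_empty_or_nonempty with rfl | hU
  · obtain ⟨v, hv⟩ := Finset.card_pos.mp (Nat.zero_lt_of_lt hcard)
    exact ⟨v, hv, by simp⟩
  choose nearest hnearest_mem hnearest_le using fun v => U.exists_min_image (dist v) hU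
  obtain ⟨s, hs, s', hs', hne, hshared⟩ :=
    Finset.exists_ne_map_eq_of_card_lt_of_maps_to hcard fun v _ => hnearest_mem v
  rcases half_le_dist_or_half_le_dist (fdiv_le_dist_s13 hs hs' hne) (nearest s) with h | h
  · exact ⟨s, hs, fun u hu => h.trans (hnearest_le s u hu)⟩
  · rw [hshared] at h
    exact ⟨s', hs', fun u hu => h.trans (hnearest_le s' u hu)⟩

theorem stmt13 {V : Type*} [MetricSpace V] [Fintype V] (k : ℕ) (hk : 2 ≤ k) (OPT : ℝ)
    (hOPT : IsGreatest {r : ℝ | ∃ S : Finset V, S.card = k ∧ r = fdiv S} OPT)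
    (U : Finset V) (hU : U.card = k - 1) :
    (∀ Sstar : Finset V, Sstar.card = k → fdiv Sstar = OPT →
      ∀ f : V → V, (∀ v : V, f v ∈ U) →
        ∃ s ∈ Sstar, ∃ s' ∈ Sstar, s ≠ s' ∧ f s = f s') ∧
    (∃ v : V, ∀ u ∈ U, OPT / 2 ≤ dist v u) := by
  constructor
  · intro Sstar hcard _ f hf
    exact Finset.exists_ne_map_eq_of_card_lt_of_maps_to (by omega) fun v _ => hf v
  · obtain ⟨S, hS, rfl⟩ := hOPT.1
    obtain ⟨v, -, hv⟩ := exists_forall_half_fdiv_le_dist_of_card_lt (S := S) (U := U) (by omega)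
    exact ⟨v, hv⟩
end
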